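/- arXiv:1006.1385 — 2 statements merged into one kernel-verified Lean document; each statement's English description precedes it below -/
import Mathlib

section
/- Let ρ > 0 and μ ∈ ℝ satisfy ρ - μ > 1, and fix v₀ > 0. Then there is a constant C such that for all v ≥ v₀, ∫_{-∞}^{∞} (1+|t|)^{μ} (1+ v|t|)^{-ρ} dt ≤ C·E(v), where E(v) := v^{-ρ} if 0 < ρ < 1, E(v) := (1 + |log v|)/v if ρ = 1, and E(v) := 1/v if ρ > 1. -/
/-!
The integrand is even in `t`, so it suffices to bound `∫₀^∞ (1+t)^μ (1+vt)^{-ρ} dt`.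
For `t ≥ 1`, `(1+t)^μ ≲ t^μ` and `(1+vt)^{-ρ} ≤ (vt)^{-ρ}`, so the tail is a multiple of
`v^{-ρ}` (finite because `μ - ρ < -1`), and `v^{-ρ} ≲ E(v)` once `v ≥ v₀`.
On `(0, 1]` the factor `(1+t)^μ` is bounded, and substituting `s = 1 + vt` leaves
`v⁻¹ ∫₁^{1+v} s^{-ρ} ds`, which is at most `v^{-ρ}/(1-ρ)`, `log(1+v)/v` or `1/((ρ-1)v)`
according as `ρ < 1`, `ρ = 1` or `ρ > 1`.
-/

open MeasureTheory

/-- The high-velocity error function `E(v)` of (3.11b). -/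
noncomputable def ABerror (ρ v : ℝ) : ℝ :=
  if ρ < 1 then v ^ (-ρ) else if ρ = 1 then (1 + |Real.log v|) / v else 1 / v

open Set Real

noncomputable def decayKernel (μ ρ v t : ℝ) : ℝ := (1 + t) ^ μ * (1 + v * t) ^ (-ρ)

section Pointwise

variable {μ ρ v t : ℝ}

lemma one_add_mul_rpow_neg_le (hρ : 0 ≤ ρ) (hv : 0 < v) (ht : 0 < t) :
    (1 + v * t) ^ (-ρ) ≤ v ^ (-ρ) * t ^ (-ρ) := by
  rw [← mul_rpow hv.le ht.le]
  exact rpow_le_rpow_of_nonpos (by positivity) (by linarith) (by linarith)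

lemma one_add_rpow_le_of_le_one (ht₀ : 0 ≤ t) (ht₁ : t ≤ 1) :
    (1 + t) ^ μ ≤ max 1 (2 ^ μ) := by
  rcases le_or_gt 0 μ with hμ | hμ
  · exact (rpow_le_rpow (by linarith) (by linarith) hμ).trans (le_max_right _ _)
  · exact (rpow_le_rpow_of_nonpos one_pos (by linarith) hμ.le).trans (by simp)

lemma one_add_rpow_le_of_one_le (ht : 1 ≤ t) :
    (1 + t) ^ μ ≤ max 1 (2 ^ μ) * t ^ μ := by
  rcases le_or_gt 0 μ with hμ | hμ
  · calc (1 + t) ^ μ ≤ (2 * t) ^ μ := rpow_le_rpow (by linarith) (by linarith) hμ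
      _ = 2 ^ μ * t ^ μ := mul_rpow zero_le_two (by linarith)
      _ ≤ max 1 (2 ^ μ) * t ^ μ := by gcongr; exact le_max_right _ _
  · calc (1 + t) ^ μ ≤ t ^ μ := rpow_le_rpow_of_nonpos (by linarith) (by linarith) hμ.le
      _ ≤ max 1 (2 ^ μ) * t ^ μ := le_mul_of_one_le_left (by positivity) (le_max_left _ _)

lemma decayKernel_nonneg (hv : 0 ≤ v) (ht : 0 ≤ t) : 0 ≤ decayKernel μ ρ v t := by
  unfold decayKernel
  positivity

lemma decayKernel_le_of_le_one (hv : 0 ≤ v) (ht₀ : 0 ≤ t) (ht₁ : t ≤ 1) :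
    decayKernel μ ρ v t ≤ max 1 (2 ^ μ) * (1 + v * t) ^ (-ρ) := by
  unfold decayKernel
  gcongr
  exact one_add_rpow_le_of_le_one ht₀ ht₁

lemma decayKernel_le_of_one_le (hρ : 0 ≤ ρ) (hv : 0 < v) (ht : 1 ≤ t) :
    decayKernel μ ρ v t ≤ max 1 (2 ^ μ) * v ^ (-ρ) * t ^ (μ - ρ) := by
  have ht₀ : 0 < t := one_pos.trans_le ht
  calc decayKernel μ ρ v t ≤ (max 1 (2 ^ μ) * t ^ μ) * (v ^ (-ρ) * t ^ (-ρ)) :=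
        mul_le_mul (one_add_rpow_le_of_one_le ht) (one_add_mul_rpow_neg_le hρ hv ht₀)
          (by positivity) (by positivity)
    _ = max 1 (2 ^ μ) * v ^ (-ρ) * t ^ (μ - ρ) := by
        rw [sub_eq_add_neg, rpow_add ht₀]; ring

end Pointwise

lemma continuousOn_decayKernel (μ ρ : ℝ) {v : ℝ} (hv : 0 ≤ v) :
    ContinuousOn (decayKernel μ ρ v) (Ici 0) := by
  refine ContinuousOn.mul ?_ ?_ <;> refine ContinuousOn.rpow_const (by fun_prop) fun t ht ↦ ?_
  all_goals
    rw [mem_Ici] at ht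
    exact Or.inl (by positivity)

section Integrals

variable {μ ρ v : ℝ}

lemma integrableOn_decayKernel_Ioi_one (hρ : 0 ≤ ρ) (hρμ : 1 < ρ - μ) (hv : 0 < v) :
    IntegrableOn (decayKernel μ ρ v) (Ioi 1) := by
  have hmajorant : IntegrableOn (fun t ↦ max 1 (2 ^ μ) * v ^ (-ρ) * t ^ (μ - ρ)) (Ioi 1) :=
    (integrableOn_Ioi_rpow_of_lt (by linarith) one_pos).const_mul _
  refine hmajorant.mono_nonneg ?_ ?_ ?_
  · exact ((continuousOn_decayKernel μ ρ hv.le).mono (Ioi_subset_Ici zero_le_one)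
      ).aestronglyMeasurable measurableSet_Ioi
  · filter_upwards [ae_restrict_mem measurableSet_Ioi] with t ht
    exact decayKernel_nonneg hv.le (zero_le_one.trans ht.le)
  · filter_upwards [ae_restrict_mem measurableSet_Ioi] with t ht
    exact decayKernel_le_of_one_le hρ hv ht.le

lemma setIntegral_decayKernel_Ioi_one_le (hρ : 0 ≤ ρ) (hρμ : 1 < ρ - μ) (hv : 0 < v) :
    ∫ t in Ioi 1, decayKernel μ ρ v t ≤ max 1 (2 ^ μ) / (ρ - μ - 1) * v ^ (-ρ) := by
  have hmajorant : IntegrableOn (fun t ↦ max 1 (2 ^ μ) * v ^ (-ρ) * t ^ (μ - ρ)) (Ioi 1) :=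
    (integrableOn_Ioi_rpow_of_lt (by linarith) one_pos).const_mul _
  calc ∫ t in Ioi 1, decayKernel μ ρ v t
      ≤ ∫ t in Ioi 1, max 1 (2 ^ μ) * v ^ (-ρ) * t ^ (μ - ρ) :=
        setIntegral_mono_on (integrableOn_decayKernel_Ioi_one hρ hρμ hv) hmajorant
          measurableSet_Ioi fun t ht ↦ decayKernel_le_of_one_le hρ hv (le_of_lt ht)
    _ = max 1 (2 ^ μ) / (ρ - μ - 1) * v ^ (-ρ) := by
        rw [integral_const_mul, integral_Ioi_rpow_of_lt (by linarith) one_pos, one_rpow,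
          show μ - ρ + 1 = -(ρ - μ - 1) by ring, div_neg]
        ring

lemma integrableOn_decayKernel_Ioc (hv : 0 ≤ v) : IntegrableOn (decayKernel μ ρ v) (Ioc 0 1) :=
  ((continuousOn_decayKernel μ ρ hv).mono Icc_subset_Ici_self).integrableOn_Icc.mono_set
    Ioc_subset_Icc_self

lemma setIntegral_decayKernel_Ioc_le (hv : 0 ≤ v) :
    ∫ t in Ioc 0 1, decayKernel μ ρ v t ≤ max 1 (2 ^ μ) * ∫ t in (0)..1, (1 + v * t) ^ (-ρ) := by
  have hcont : ContinuousOn (fun t : ℝ ↦ (1 + v * t) ^ (-ρ)) (Icc 0 1) :=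
    ContinuousOn.rpow_const (by fun_prop) fun t ht ↦ Or.inl (by have := ht.1; positivity)
  rw [intervalIntegral.integral_of_le zero_le_one, ← integral_const_mul]
  exact setIntegral_mono_on (integrableOn_decayKernel_Ioc hv)
    ((hcont.integrableOn_Icc.mono_set Ioc_subset_Icc_self).const_mul _) measurableSet_Ioc
    fun t ht ↦ decayKernel_le_of_le_one hv ht.1.le ht.2

lemma setIntegral_decayKernel_Ioi_zero (hρ : 0 ≤ ρ) (hρμ : 1 < ρ - μ) (hv : 0 < v) :
    ∫ t in Ioi 0, decayKernel μ ρ v t =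
      (∫ t in Ioc 0 1, decayKernel μ ρ v t) + ∫ t in Ioi 1, decayKernel μ ρ v t := by
  rw [← Ioc_union_Ioi_eq_Ioi zero_le_one, setIntegral_union (Ioc_disjoint_Ioi le_rfl)
    measurableSet_Ioi (integrableOn_decayKernel_Ioc hv.le)
    (integrableOn_decayKernel_Ioi_one hρ hρμ hv)]

lemma integral_one_add_mul_rpow_neg (ρ : ℝ) (hv : 0 < v) :
    ∫ t in (0)..1, (1 + v * t) ^ (-ρ) = v⁻¹ * ∫ s in (1)..(1 + v), s ^ (-ρ) := by
  simp [intervalIntegral.integral_comp_add_mul (fun s ↦ s ^ (-ρ)) hv.ne']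

end Integrals

section PowerIntegral

variable {ρ v : ℝ}

lemma integral_rpow_neg_of_ne_one (hρ : ρ ≠ 1) (hv : 0 ≤ v) :
    ∫ s in (1)..(1 + v), s ^ (-ρ) = ((1 + v) ^ (1 - ρ) - 1) / (1 - ρ) := by
  rw [integral_rpow (Or.inr ⟨by contrapose! hρ; linarith, by
    rw [uIcc_of_le (by linarith)]; exact fun h ↦ by linarith [h.1]⟩), one_rpow, neg_add_eq_sub]

lemma integral_rpow_neg_le_of_lt_one (hρ₀ : 0 ≤ ρ) (hρ₁ : ρ < 1) (hv : 0 ≤ v) :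
    ∫ s in (1)..(1 + v), s ^ (-ρ) ≤ v ^ (1 - ρ) / (1 - ρ) := by
  rw [integral_rpow_neg_of_ne_one hρ₁.ne hv]
  gcongr
  have := rpow_add_le_add_rpow zero_le_one hv (by linarith : 0 ≤ 1 - ρ) (by linarith)
  rw [one_rpow] at this
  linarith

lemma integral_rpow_neg_le_of_one_lt (hρ : 1 < ρ) (hv : 0 ≤ v) :
    ∫ s in (1)..(1 + v), s ^ (-ρ) ≤ 1 / (ρ - 1) := by
  rw [integral_rpow_neg_of_ne_one hρ.ne' hv, ← neg_div_neg_eq, neg_sub, neg_sub]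
  gcongr
  linarith [rpow_nonneg (by linarith : (0 : ℝ) ≤ 1 + v) (1 - ρ)]

lemma integral_rpow_neg_one_eq_log (hv : 0 ≤ v) :
    ∫ s in (1)..(1 + v), s ^ (-1 : ℝ) = log (1 + v) := by
  simp_rw [rpow_neg_one]
  rw [integral_inv_of_pos one_pos (by linarith), div_one]

lemma log_one_add_le_one_add_abs_log (hv : 0 < v) : log (1 + v) ≤ 1 + |log v| := by
  rcases le_total v 1 with hv₁ | hv₁
  · linarith [log_le_sub_one_of_pos (by linarith : 0 < 1 + v), abs_nonneg (log v)]
  · calc log (1 + v) ≤ log (exp 1 * v) :=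
          log_le_log (by positivity) (by nlinarith [add_one_le_exp 1])
      _ = 1 + log v := by rw [log_mul (exp_pos 1).ne' hv.ne', log_exp]
      _ ≤ 1 + |log v| := by gcongr; exact le_abs_self _

end PowerIntegral

section ErrorFunction

variable {ρ : ℝ}

lemma exists_integral_one_add_mul_rpow_neg_le_ABerror (hρ : 0 < ρ) :
    ∃ K, ∀ v, 0 < v → ∫ t in (0)..1, (1 + v * t) ^ (-ρ) ≤ K * ABerror ρ v := by
  rcases lt_trichotomy ρ 1 with hρ₁ | rfl | hρ₁
  · refine ⟨1 / (1 - ρ), fun v hv ↦ ?_⟩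
    have hE : ABerror ρ v = v ^ (1 - ρ) * v⁻¹ := by
      rw [ABerror, if_pos hρ₁, ← rpow_neg_one, ← rpow_add hv]; ring_nf
    calc ∫ t in (0)..1, (1 + v * t) ^ (-ρ) ≤ v⁻¹ * (v ^ (1 - ρ) / (1 - ρ)) := by
          rw [integral_one_add_mul_rpow_neg ρ hv]
          gcongr
          exact integral_rpow_neg_le_of_lt_one hρ.le hρ₁ hv.le
      _ = 1 / (1 - ρ) * ABerror ρ v := by rw [hE]; ring
  · refine ⟨1, fun v hv ↦ ?_⟩
    rw [integral_one_add_mul_rpow_neg 1 hv, integral_rpow_neg_one_eq_log hv.le, ABerror,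
      if_neg (lt_irrefl 1), if_pos rfl, one_mul, inv_mul_eq_div]
    gcongr
    exact log_one_add_le_one_add_abs_log hv
  · refine ⟨1 / (ρ - 1), fun v hv ↦ ?_⟩
    calc ∫ t in (0)..1, (1 + v * t) ^ (-ρ) ≤ v⁻¹ * (1 / (ρ - 1)) := by
          rw [integral_one_add_mul_rpow_neg ρ hv]
          gcongr
          exact integral_rpow_neg_le_of_one_lt hρ₁ hv.le
      _ = 1 / (ρ - 1) * ABerror ρ v := by
          rw [ABerror, if_neg (not_lt.2 hρ₁.le), if_neg hρ₁.ne']; ring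

lemma exists_rpow_neg_le_ABerror {v₀ : ℝ} (hv₀ : 0 < v₀) :
    ∃ D, ∀ v, v₀ ≤ v → v ^ (-ρ) ≤ D * ABerror ρ v := by
  rcases lt_trichotomy ρ 1 with hρ₁ | rfl | hρ₁
  · exact ⟨1, fun v _ ↦ by rw [ABerror, if_pos hρ₁, one_mul]⟩
  · refine ⟨1, fun v hv ↦ ?_⟩
    have hv' : 0 < v := hv₀.trans_le hv
    rw [ABerror, if_neg (lt_irrefl 1), if_pos rfl, one_mul, rpow_neg_one, ← one_div]
    gcongr
    exact le_add_of_nonneg_right (abs_nonneg _)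
  · refine ⟨v₀ ^ (1 - ρ), fun v hv ↦ ?_⟩
    have hv' : 0 < v := hv₀.trans_le hv
    rw [ABerror, if_neg (not_lt.2 hρ₁.le), if_neg hρ₁.ne', show -ρ = (1 - ρ) - 1 by ring,
      rpow_sub_one hv'.ne', mul_one_div]
    exact div_le_div_of_nonneg_right (rpow_le_rpow_of_nonpos hv₀ hv (by linarith)) hv'.le

end ErrorFunction

/-- the time-decay integral bound (2.25): for `ρ > 0`, `ρ - μ > 1` and `v₀ > 0`
there is `C` with `∫_{-∞}^{∞} (1+|t|)^μ (1+v|t|)^{-ρ} dt ≤ C · E(v)` for all `v ≥ v₀`. -/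
theorem time_decay_integral_bound (ρ μ v₀ : ℝ) (hρ : 0 < ρ) (hρμ : 1 < ρ - μ)
    (hv₀ : 0 < v₀) :
    ∃ C : ℝ, ∀ v : ℝ, v₀ ≤ v →
      (∫ t : ℝ, (1 + |t|) ^ μ * (1 + v * |t|) ^ (-ρ)) ≤ C * ABerror ρ v := by
  obtain ⟨K, hK⟩ := exists_integral_one_add_mul_rpow_neg_le_ABerror hρ
  obtain ⟨D, hD⟩ := exists_rpow_neg_le_ABerror (ρ := ρ) hv₀
  set A := max 1 ((2 : ℝ) ^ μ)
  refine ⟨2 * (A * K + A / (ρ - μ - 1) * D), fun v hv ↦ ?_⟩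
  have hv' : 0 < v := hv₀.trans_le hv
  calc ∫ t, (1 + |t|) ^ μ * (1 + v * |t|) ^ (-ρ)
      = 2 * ∫ t in Ioi 0, decayKernel μ ρ v t := integral_comp_abs (f := decayKernel μ ρ v)
    _ = 2 * ((∫ t in Ioc 0 1, decayKernel μ ρ v t) + ∫ t in Ioi 1, decayKernel μ ρ v t) := by
        rw [setIntegral_decayKernel_Ioi_zero hρ.le hρμ hv']
    _ ≤ 2 * (A * (K * ABerror ρ v) + A / (ρ - μ - 1) * (D * ABerror ρ v)) := by
        gcongr
        · exact (setIntegral_decayKernel_Ioc_le hv'.le).trans (by gcongr; exact hK v hv')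
        · exact (setIntegral_decayKernel_Ioi_one_le hρ.le hρμ hv').trans
            (by gcongr; exact hD v hv)
    _ = 2 * (A * K + A / (ρ - μ - 1) * D) * ABerror ρ v := by ring
end

section
/- Let a : ℝⁿ → ℝ be bounded measurable, φ ∈ L²(ℝⁿ), v ∈ ℝⁿ \ {0}, τ ∈ ℝ, and suppose a(x + (v/|v|)τ) φ(x) = 0 for almost every x (i.e. the translated support of a is disjoint from the support of φ). Then, with H₀ := -(1/(2m))Δ and v := |v|, one has ‖a(x) e^{-i (τ/v) H₀} e^{i m v·x} φ‖ = ‖a(x + (v/|v|)τ)(e^{-i H₀ τ/v} - I)φ‖ ≤ ‖a‖_∞ ‖(e^{-i H₀ τ/v} - I)φ‖. -/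
/-!
A Galilean boost `e^{i m v·y}` shifts the Fourier variable by `m v`; completing the square in
the free symbol `t |ξ + m v|² / (2m)` shows that `e^{-i t H₀}` applied to the boosted state is the
propagated state translated by `t v`, times a unimodular phase. Translating back by `t v = v̂ τ`
moves `a` to `a(x + v̂ τ)`, and the support hypothesis lets one subtract `φ` at no cost.
-/

open MeasureTheory

/-- The Fourier transform on `ℝⁿ` with the symmetric normalization. -/
noncomputable def ft (n : ℕ) (φ : EuclideanSpace ℝ (Fin n) → ℂ)
    (ξ : EuclideanSpace ℝ (Fin n)) : ℂ :=
  (((2 * Real.pi) ^ (-(n : ℝ) / 2) : ℝ) : ℂ) *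
    ∫ x : EuclideanSpace ℝ (Fin n), Complex.exp (-Complex.I * ((inner ℝ x ξ : ℝ) : ℂ)) * φ x

/-- The inverse Fourier transform with the same normalization. -/
noncomputable def ftInv (n : ℕ) (ψ : EuclideanSpace ℝ (Fin n) → ℂ)
    (x : EuclideanSpace ℝ (Fin n)) : ℂ :=
  (((2 * Real.pi) ^ (-(n : ℝ) / 2) : ℝ) : ℂ) *
    ∫ ξ : EuclideanSpace ℝ (Fin n), Complex.exp (Complex.I * ((inner ℝ x ξ : ℝ) : ℂ)) * ψ ξ

/-- The free propagator `e^{-i t H₀}`, `H₀ = -(1/(2m))Δ`, as the Fourier multiplier with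
symbol `e^{-i t |ξ|²/(2m)}`. -/
noncomputable def freeProp (n : ℕ) (m t : ℝ) (φ : EuclideanSpace ℝ (Fin n) → ℂ) :
    EuclideanSpace ℝ (Fin n) → ℂ :=
  ftInv n (fun ξ => Complex.exp (-Complex.I * ((t * ‖ξ‖ ^ 2 / (2 * m) : ℝ) : ℂ)) * ft n φ ξ)

theorem eLpNorm_comp_add_right {G E : Type*} [AddGroup G] [MeasurableSpace G] [MeasurableAdd G]
    [NormedAddCommGroup E] (μ : Measure G) [μ.IsAddRightInvariant] (f : G → E) (s : G)
    (p : ENNReal) :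
    eLpNorm (fun x => f (x + s)) p μ = eLpNorm f p μ := by
  conv_rhs => rw [← map_add_right_eq_self μ s]
  exact ((measurableEmbedding_addRight s).eLpNorm_map_measure).symm

theorem ft_exp_inner_mul {n : ℕ} (m : ℝ) (vv : EuclideanSpace ℝ (Fin n))
    (φ : EuclideanSpace ℝ (Fin n) → ℂ) (ξ : EuclideanSpace ℝ (Fin n)) :
    ft n (fun y => Complex.exp (Complex.I * m * ((inner ℝ vv y : ℝ) : ℂ)) * φ y) ξ
      = ft n φ (ξ - m • vv) := by
  unfold ft
  congr 1
  refine integral_congr_ae (Filter.Eventually.of_forall fun x => ?_)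
  dsimp only
  rw [inner_sub_right, real_inner_smul_right, ← mul_assoc, ← Complex.exp_add]
  congr 2
  push_cast
  rw [real_inner_comm x vv]
  ring

theorem exp_inner_mul_exp_freeSymbol_add_smul {n : ℕ} {m : ℝ} (hm : m ≠ 0) (t : ℝ)
    (vv x ξ : EuclideanSpace ℝ (Fin n)) :
    Complex.exp (Complex.I * ((inner ℝ x (ξ + m • vv) : ℝ) : ℂ)) *
        Complex.exp (-Complex.I * ((t * ‖ξ + m • vv‖ ^ 2 / (2 * m) : ℝ) : ℂ))
      = Complex.exp (((m * (inner ℝ vv x : ℝ) - t * m * ‖vv‖ ^ 2 / 2 : ℝ) : ℂ) * Complex.I) *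
          (Complex.exp (Complex.I * ((inner ℝ (x - t • vv) ξ : ℝ) : ℂ)) *
            Complex.exp (-Complex.I * ((t * ‖ξ‖ ^ 2 / (2 * m) : ℝ) : ℂ))) := by
  have hsq : ‖ξ + m • vv‖ ^ 2 = ‖ξ‖ ^ 2 + 2 * (m * (inner ℝ ξ vv : ℝ)) + m ^ 2 * ‖vv‖ ^ 2 := by
    rw [norm_add_sq_real, real_inner_smul_right, norm_smul, mul_pow, Real.norm_eq_abs, sq_abs]
  rw [hsq, inner_add_right, real_inner_smul_right, inner_sub_left, real_inner_smul_left,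
    real_inner_comm ξ vv, real_inner_comm vv x]
  simp only [← Complex.exp_add]
  congr 1
  have hm' : (m : ℂ) ≠ 0 := by exact_mod_cast hm
  push_cast
  field_simp
  ring

theorem freeProp_exp_inner_mul {n : ℕ} {m : ℝ} (hm : m ≠ 0) (t : ℝ)
    (vv : EuclideanSpace ℝ (Fin n)) (φ : EuclideanSpace ℝ (Fin n) → ℂ)
    (x : EuclideanSpace ℝ (Fin n)) :
    freeProp n m t (fun y => Complex.exp (Complex.I * m * ((inner ℝ vv y : ℝ) : ℂ)) * φ y) x
      = Complex.exp (((m * (inner ℝ vv x : ℝ) - t * m * ‖vv‖ ^ 2 / 2 : ℝ) : ℂ) * Complex.I)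
          * freeProp n m t φ (x - t • vv) := by
  unfold freeProp ftInv
  simp_rw [ft_exp_inner_mul m vv φ, ← mul_assoc]
  rw [← integral_add_right_eq_self _ (m • vv)]
  conv_rhs => rw [mul_assoc, mul_left_comm, ← integral_const_mul]
  congr 1
  refine integral_congr_ae (Filter.Eventually.of_forall fun ξ => ?_)
  dsimp only
  rw [add_sub_cancel_right, exp_inner_mul_exp_freeSymbol_add_smul hm]
  ring

theorem localization_free_evolution_bound_general {n : ℕ} (m : ℝ) (hm : 0 < m)
    (a : EuclideanSpace ℝ (Fin n) → ℝ)
    (A : ℝ) (ha_bdd : ∀ x, |a x| ≤ A)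
    (vv : EuclideanSpace ℝ (Fin n)) (τ : ℝ)
    (φ : EuclideanSpace ℝ (Fin n) → ℂ)
    (hsupp : ∀ᵐ x : EuclideanSpace ℝ (Fin n) ∂(volume : Measure (EuclideanSpace ℝ (Fin n))),
      (a (x + τ • (‖vv‖⁻¹ • vv)) : ℂ) * φ x = 0) :
    eLpNorm (fun x => (a x : ℂ) *
        freeProp n m (τ / ‖vv‖)
          (fun y => Complex.exp (Complex.I * m * ((inner ℝ vv y : ℝ) : ℂ)) * φ y) x) 2
        (volume : Measure (EuclideanSpace ℝ (Fin n)))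
      = eLpNorm (fun x => (a (x + τ • (‖vv‖⁻¹ • vv)) : ℂ) *
          (freeProp n m (τ / ‖vv‖) φ x - φ x)) 2
          (volume : Measure (EuclideanSpace ℝ (Fin n))) ∧
    eLpNorm (fun x => (a (x + τ • (‖vv‖⁻¹ • vv)) : ℂ) *
          (freeProp n m (τ / ‖vv‖) φ x - φ x)) 2
          (volume : Measure (EuclideanSpace ℝ (Fin n)))
      ≤ ENNReal.ofReal A *
        eLpNorm (fun x => freeProp n m (τ / ‖vv‖) φ x - φ x) 2
          (volume : Measure (EuclideanSpace ℝ (Fin n))) := by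
  set t : ℝ := τ / ‖vv‖
  have hshift : τ • (‖vv‖⁻¹ • vv) = t • vv := by rw [smul_smul, ← div_eq_mul_inv]
  rw [hshift] at hsupp ⊢
  refine ⟨?_, eLpNorm_le_mul_eLpNorm_of_ae_le_mul (Filter.Eventually.of_forall fun x => ?_) 2⟩
  · calc _ = eLpNorm (fun x => (a x : ℂ) * freeProp n m t φ (x - t • vv)) 2 volume :=
          eLpNorm_congr_norm_ae <| Filter.Eventually.of_forall fun x => by
            rw [freeProp_exp_inner_mul hm.ne', norm_mul, norm_mul, norm_mul,
              Complex.norm_exp_ofReal_mul_I, one_mul]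
      _ = eLpNorm (fun x => (a (x + t • vv) : ℂ) * freeProp n m t φ x) 2 volume := by
          simpa only [add_sub_cancel_right] using (eLpNorm_comp_add_right volume
            (fun x => (a x : ℂ) * freeProp n m t φ (x - t • vv)) (t • vv) 2).symm
      _ = _ := eLpNorm_congr_ae <| by
          filter_upwards [hsupp] with x hx
          rw [mul_sub, hx, sub_zero]
  · rw [norm_mul, Complex.norm_real, Real.norm_eq_abs]
    exact mul_le_mul_of_nonneg_right (ha_bdd _) (norm_nonneg _)

/-- if the translated support of `a` is disjoint from the support of `φ`
(`a(x + v̂ τ) φ(x) = 0` a.e.), then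
`‖a(x) e^{-i(τ/v)H₀} e^{i m v·x} φ‖ = ‖a(x + v̂ τ)(e^{-i H₀ τ/v} - I)φ‖
  ≤ ‖a‖_∞ ‖(e^{-i H₀ τ/v} - I)φ‖`, where `v̂ = v/|v|`, `v = |v|`. -/
theorem localization_free_evolution_bound {n : ℕ} (m : ℝ) (hm : 0 < m)
    (a : EuclideanSpace ℝ (Fin n) → ℝ) (ha_meas : Measurable a)
    (A : ℝ) (ha_bdd : ∀ x, |a x| ≤ A)
    (vv : EuclideanSpace ℝ (Fin n)) (hvv : vv ≠ 0) (τ : ℝ)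
    (φ : EuclideanSpace ℝ (Fin n) → ℂ)
    (hφ : MemLp φ 2 (volume : Measure (EuclideanSpace ℝ (Fin n))))
    (hsupp : ∀ᵐ x : EuclideanSpace ℝ (Fin n) ∂(volume : Measure (EuclideanSpace ℝ (Fin n))),
      (a (x + τ • (‖vv‖⁻¹ • vv)) : ℂ) * φ x = 0) :
    eLpNorm (fun x => (a x : ℂ) *
        freeProp n m (τ / ‖vv‖)
          (fun y => Complex.exp (Complex.I * m * ((inner ℝ vv y : ℝ) : ℂ)) * φ y) x) 2
        (volume : Measure (EuclideanSpace ℝ (Fin n)))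
      = eLpNorm (fun x => (a (x + τ • (‖vv‖⁻¹ • vv)) : ℂ) *
          (freeProp n m (τ / ‖vv‖) φ x - φ x)) 2
          (volume : Measure (EuclideanSpace ℝ (Fin n))) ∧
    eLpNorm (fun x => (a (x + τ • (‖vv‖⁻¹ • vv)) : ℂ) *
          (freeProp n m (τ / ‖vv‖) φ x - φ x)) 2
          (volume : Measure (EuclideanSpace ℝ (Fin n)))
      ≤ ENNReal.ofReal A *
        eLpNorm (fun x => freeProp n m (τ / ‖vv‖) φ x - φ x) 2
          (volume : Measure (EuclideanSpace ℝ (Fin n))) :=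
  localization_free_evolution_bound_general m hm a A ha_bdd vv τ φ hsupp
end
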